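/- Let M and E be real symmetric n×n matrices and suppose M has nonnegative entries. Then the largest singular value of the Hadamard product M ∘ E satisfies σ₁(M ∘ E) ≤ (max_{i,j} |E(i,j)|)·σ₁(M). -/

import Mathlib

/-!
Entrywise, `|((M ∘ E) x)ᵢ| ≤ ∑ⱼ Mᵢⱼ |Eᵢⱼ| |xⱼ| ≤ c (M |x|)ᵢ` with `c = maxᵢⱼ |Eᵢⱼ|`, because `M` is
nonnegative. The Euclidean norm is monotone in the absolute values of the coordinates and does not
see signs, so `‖(M ∘ E) x‖ ≤ c ‖M |x|‖ ≤ c σ₁(M) ‖|x|‖ = c σ₁(M) ‖x‖`.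
-/

open Matrix

noncomputable section

/-- Largest singular value of a square real matrix, i.e. its ℓ² operator
(spectral) norm. -/
def sigma1 {n : ℕ} (A : Matrix (Fin n) (Fin n) ℝ) : ℝ :=
  ‖Matrix.toEuclideanCLM (𝕜 := ℝ) A‖

theorem EuclideanSpace.norm_le_norm_of_forall_norm_le {𝕜 ι : Type*} [RCLike 𝕜] [Fintype ι]
    {x y : EuclideanSpace 𝕜 ι} (h : ∀ i, ‖x i‖ ≤ ‖y i‖) : ‖x‖ ≤ ‖y‖ := by
  rw [EuclideanSpace.norm_eq, EuclideanSpace.norm_eq]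
  gcongr with i
  exact h i

theorem EuclideanSpace.norm_toLp_abs {ι : Type*} [Fintype ι] (x : EuclideanSpace ℝ ι) :
    ‖WithLp.toLp 2 |x.ofLp|‖ = ‖x‖ := by
  simp [EuclideanSpace.norm_eq]

theorem Matrix.abs_hadamard_mulVec_le {m n : Type*} [Fintype n] {M E : Matrix m n ℝ} {c : ℝ}
    (hM : ∀ i j, 0 ≤ M i j) (hE : ∀ i j, |E i j| ≤ c) (x : n → ℝ) (i : m) :
    |(M ⊙ E *ᵥ x) i| ≤ c * (M *ᵥ |x|) i := by
  calc |(M ⊙ E *ᵥ x) i| ≤ ∑ j, M i j * |E i j| * |x j| := by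
        simpa [mulVec, dotProduct, abs_mul, abs_of_nonneg (hM i _)]
          using Finset.abs_sum_le_sum_abs (fun j => (M ⊙ E) i j * x j) Finset.univ
    _ ≤ ∑ j, c * (M i j * |x j|) := by
        refine Finset.sum_le_sum fun j _ => ?_
        have := mul_le_mul_of_nonneg_right (mul_le_mul_of_nonneg_left (hE i j) (hM i j))
          (abs_nonneg (x j))
        linarith
    _ = c * (M *ᵥ |x|) i := by simp [mulVec, dotProduct, Finset.mul_sum]

theorem Matrix.norm_toEuclideanCLM_hadamard_le {n : Type*} [Fintype n] [DecidableEq n]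
    {M E : Matrix n n ℝ} {c : ℝ} (hM : ∀ i j, 0 ≤ M i j) (hE : ∀ i j, |E i j| ≤ c)
    (hc : 0 ≤ c) :
    ‖toEuclideanCLM (𝕜 := ℝ) (M ⊙ E)‖ ≤ c * ‖toEuclideanCLM (𝕜 := ℝ) M‖ := by
  refine ContinuousLinearMap.opNorm_le_bound _ (by positivity) fun x => ?_
  calc ‖toEuclideanCLM (𝕜 := ℝ) (M ⊙ E) x‖
        ≤ ‖c • toEuclideanCLM (𝕜 := ℝ) M (WithLp.toLp 2 |x.ofLp|)‖ := by
        refine EuclideanSpace.norm_le_norm_of_forall_norm_le fun i => ?_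
        simp only [ofLp_toEuclideanCLM, toEuclideanCLM_toLp, PiLp.smul_apply, smul_eq_mul,
          Real.norm_eq_abs]
        exact (abs_hadamard_mulVec_le hM hE _ i).trans (le_abs_self _)
    _ ≤ c * (‖toEuclideanCLM (𝕜 := ℝ) M‖ * ‖x‖) := by
        rw [norm_smul, Real.norm_of_nonneg hc, ← EuclideanSpace.norm_toLp_abs x]
        gcongr
        exact ContinuousLinearMap.le_opNorm _ _
    _ = c * ‖toEuclideanCLM (𝕜 := ℝ) M‖ * ‖x‖ := by ring

theorem statement_16_general {n : ℕ} (M E : Matrix (Fin n) (Fin n) ℝ)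
    (hMnonneg : ∀ i j, 0 ≤ M i j) :
    sigma1 (Matrix.hadamard M E) ≤ (⨆ i, ⨆ j, |E i j|) * sigma1 M := by
  refine norm_toEuclideanCLM_hadamard_le hMnonneg (fun i j => ?_)
    (Real.iSup_nonneg fun i => Real.iSup_nonneg fun j => abs_nonneg (E i j))
  exact (le_ciSup (Finite.bddAbove_range _) j).trans
    (le_ciSup (f := fun i => ⨆ j, |E i j|) (Finite.bddAbove_range _) i)

/-- Lemma A.1, Hadamard product bound: if `M` is real symmetric
with nonnegative entries and `E` is real symmetric, then
`σ₁(M ∘ E) ≤ (max_{i,j} |E(i,j)|)·σ₁(M)`. -/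
theorem statement_16 {n : ℕ} (M E : Matrix (Fin n) (Fin n) ℝ)
    (hM : M.IsSymm) (hE : E.IsSymm) (hMnonneg : ∀ i j, 0 ≤ M i j) :
    sigma1 (Matrix.hadamard M E) ≤ (⨆ i, ⨆ j, |E i j|) * sigma1 M :=
  statement_16_general M E hMnonneg

end
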